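/- arXiv:2204.10040 — 3 statements merged into one kernel-verified Lean document; each statement's English description precedes it below -/
import Mathlib

section
/- Consider a Strongly Stable Roommates with Ties instance in which every strongly stable matching is complete, together with a set Q of forced pairs; call a strongly stable matching forced-respecting if it contains every pair of Q. Let 𝓜 be an equivalence class of strongly stable matchings containing a forced-respecting matching and let F be a minimal set of pairs such that every forced-respecting matching belonging to 𝓜 contains at least one pair of F. Then for every equivalence class 𝓜' such that some forced-respecting matching M' ∈ 𝓜' contains some pair e ∈ F, and for every pair e' ∈ F, there is a forced-respecting matching M'' ∈ 𝓜' with e' ∈ M''. -/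
section SRDefs

variable {A : Type*}

/-- A matching in a Stable Roommates with Ties instance with acceptability `acc`:
a set of unordered pairs of mutually acceptable agents, each agent in at most one pair. -/
def IsSRMatching (acc : A → A → Prop) (M : Finset (Sym2 A)) : Prop :=
  (∀ a b : A, s(a, b) ∈ M → acc a b) ∧
  (∀ a b c : A, s(a, b) ∈ M → s(a, c) ∈ M → b = c)

def Matched (M : Finset (Sym2 A)) (a : A) : Prop := ∃ b, s(a, b) ∈ M

/-- A matching is complete if every agent is matched. -/
def IsCompleteM (M : Finset (Sym2 A)) : Prop := ∀ a : A, Matched M a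

/-- `a` is unmatched or strictly prefers `b` to its partner (smaller rank = better). -/
def StPref (rk : A → A → ℕ) (M : Finset (Sym2 A)) (a b : A) : Prop :=
  ¬ Matched M a ∨ ∃ c, s(a, c) ∈ M ∧ rk a b < rk a c

/-- `a` is unmatched or weakly prefers `b` to its partner. -/
def WkPref (rk : A → A → ℕ) (M : Finset (Sym2 A)) (a b : A) : Prop :=
  ¬ Matched M a ∨ ∃ c, s(a, c) ∈ M ∧ rk a b ≤ rk a c

/-- A pair `{a, b}` of acceptable agents blocks `M` under strong stability:
one of the two agents is unmatched or strictly prefers the other to its partner,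
and the other is unmatched or weakly prefers the first to its partner. -/
def BlocksStrong (acc : A → A → Prop) (rk : A → A → ℕ) (M : Finset (Sym2 A)) (a b : A) : Prop :=
  acc a b ∧
  ((StPref rk M a b ∧ WkPref rk M b a) ∨ (WkPref rk M a b ∧ StPref rk M b a))

/-- A strongly stable matching. -/
def IsStronglyStable (acc : A → A → Prop) (rk : A → A → ℕ) (M : Finset (Sym2 A)) : Prop :=
  IsSRMatching acc M ∧ ∀ a b, ¬ BlocksStrong acc rk M a b

/-- Two (complete strongly stable) matchings are equivalent if every agent has
the same rank for its partner in both; `REquiv rk M N` expresses this by comparing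
the ranks of the partners of each agent in `M` and in `N`. -/
def REquiv (rk : A → A → ℕ) (M N : Finset (Sym2 A)) : Prop :=
  ∀ a b c : A, s(a, b) ∈ M → s(a, c) ∈ N → rk a b = rk a c

end SRDefs

set_option linter.unusedSectionVars false
set_option maxHeartbeats 1000000

section Helpers
variable {A : Type*} [DecidableEq A]

variable {A : Type*} [DecidableEq A]

noncomputable def pFn (M : Finset (Sym2 A)) (hc : IsCompleteM M) (a : A) : A :=
  (hc a).choose

lemma pFn_mem (M : Finset (Sym2 A)) (hc : IsCompleteM M) (a : A) :
    s(a, pFn M hc a) ∈ M := (hc a).choose_spec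

lemma partner_eq {acc : A → A → Prop} {M : Finset (Sym2 A)} (hsr : IsSRMatching acc M)
    (hc : IsCompleteM M) {a b : A} (h : s(a, b) ∈ M) : b = pFn M hc a :=
  hsr.2 a b _ h (pFn_mem M hc a)

lemma pFn_invol {acc : A → A → Prop} {M : Finset (Sym2 A)} (hsr : IsSRMatching acc M)
    (hc : IsCompleteM M) (a : A) : pFn M hc (pFn M hc a) = a := by
  have h : s(pFn M hc a, a) ∈ M := by rw [Sym2.eq_swap]; exact pFn_mem M hc a
  exact (partner_eq hsr hc h).symm

lemma finite_of_complete {M : Finset (Sym2 A)} (hc : IsCompleteM M) : Finite A := by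
  have : (Set.univ : Set A) ⊆ ⋃ z ∈ (M : Set (Sym2 A)), {x | x ∈ z} := by
    intro a _
    obtain ⟨b, hb⟩ := hc a
    exact Set.mem_biUnion hb (Sym2.mem_mk_left a b)
  have hfin : (⋃ z ∈ (M : Set (Sym2 A)), {x | x ∈ z}).Finite := by
    apply Set.Finite.biUnion M.finite_toSet
    intro z _
    induction z using Sym2.ind with
    | _ x y =>
      have : {w | w ∈ s(x, y)} ⊆ {x, y} := by
        intro w hw
        rw [Set.mem_setOf_eq, Sym2.mem_iff] at hw
        simpa using hw
      exact ((Set.finite_singleton y).insert x).subset this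
  exact Set.finite_univ_iff.mp (hfin.subset this)

end Helpers

section Main
variable {A : Type*} [DecidableEq A]

/-- transfer of strong stability along pointwise-equal rank vectors. -/
lemma transfer {acc : A → A → Prop} {rk : A → A → ℕ} {M X : Finset (Sym2 A)}
    (hM : IsStronglyStable acc rk M) (hMc : IsCompleteM M)
    (hXsr : IsSRMatching acc X) (hXc : IsCompleteM X)
    (hvec : ∀ a b c, s(a, b) ∈ M → s(a, c) ∈ X → rk a b = rk a c) :
    IsStronglyStable acc rk X := by
  refine ⟨hXsr, fun a b hblk => hM.2 a b ?_⟩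
  have key : ∀ x y, (StPref rk X x y → StPref rk M x y) ∧
      (WkPref rk X x y → WkPref rk M x y) := by
    intro x y
    have hx := pFn_mem X hXc x
    have hxM := pFn_mem M hMc x
    have heq : rk x (pFn M hMc x) = rk x (pFn X hXc x) := hvec x _ _ hxM hx
    constructor
    · rintro (h | ⟨c, hc, hlt⟩)
      · exact absurd ⟨_, hx⟩ h
      · have : c = pFn X hXc x := hXsr.2 x c _ hc hx
        subst this
        exact Or.inr ⟨_, hxM, heq ▸ hlt⟩
    · rintro (h | ⟨c, hc, hle⟩)
      · exact absurd ⟨_, hx⟩ h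
      · have : c = pFn X hXc x := hXsr.2 x c _ hc hx
        subst this
        exact Or.inr ⟨_, hxM, heq ▸ hle⟩
  obtain ⟨hacc, h | h⟩ := hblk
  · exact ⟨hacc, Or.inl ⟨(key a b).1 h.1, (key b a).2 h.2⟩⟩
  · exact ⟨hacc, Or.inr ⟨(key a b).2 h.1, (key b a).1 h.2⟩⟩

/-- S/T counting lemma: the disagreement set between two strongly stable complete
matchings is closed under edges of either matching. -/
lemma disagree_closed [Finite A] {acc : A → A → Prop} {rk : A → A → ℕ} {X Y : Finset (Sym2 A)}
    (hX : IsStronglyStable acc rk X) (hY : IsStronglyStable acc rk Y)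
    (hXc : IsCompleteM X) (hYc : IsCompleteM Y) :
    ∀ a b : A, rk a (pFn X hXc a) ≠ rk a (pFn Y hYc a) →
      (s(a, b) ∈ X ∨ s(a, b) ∈ Y) →
      rk b (pFn X hXc b) ≠ rk b (pFn Y hYc b) := by
  set pX := pFn X hXc with hpX
  set pY := pFn Y hYc with hpY
  set S : Set A := {a | rk a (pX a) < rk a (pY a)} with hS
  set T : Set A := {a | rk a (pY a) < rk a (pX a)} with hT
  have hXinv : ∀ a, pX (pX a) = a := pFn_invol hX.1 hXc
  have hYinv : ∀ a, pY (pY a) = a := pFn_invol hY.1 hYc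
  have hXinj : Function.Injective pX := by
    intro a b h; rw [← hXinv a, h, hXinv]
  have hYinj : Function.Injective pY := by
    intro a b h; rw [← hYinv a, h, hYinv]
  -- a ∈ S (prefers X) ⇒ pX a ∈ T
  have hST : ∀ a ∈ S, pX a ∈ T := by
    intro a ha
    have hblk := hY.2 a (pX a)
    have hacc : acc a (pX a) := hX.1.1 a _ (pFn_mem X hXc a)
    have hst : StPref rk Y a (pX a) := Or.inr ⟨pY a, pFn_mem Y hYc a, ha⟩
    have hnw : ¬ WkPref rk Y (pX a) a := by
      intro hw
      exact hblk ⟨hacc, Or.inl ⟨hst, hw⟩⟩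
    rw [WkPref] at hnw
    push_neg at hnw
    obtain ⟨hm, hlt⟩ := hnw
    have h1 : rk (pX a) (pY (pX a)) < rk (pX a) a := hlt _ (pFn_mem Y hYc (pX a))
    have h2 : rk (pX a) a = rk (pX a) (pX (pX a)) := by rw [hXinv]
    exact Set.mem_setOf_eq ▸ (h2 ▸ h1)
  -- a ∈ T (prefers Y) ⇒ pY a ∈ S
  have hTS : ∀ a ∈ T, pY a ∈ S := by
    intro a ha
    have hblk := hX.2 a (pY a)
    have hacc : acc a (pY a) := hY.1.1 a _ (pFn_mem Y hYc a)
    have hst : StPref rk X a (pY a) := Or.inr ⟨pX a, pFn_mem X hXc a, ha⟩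
    have hnw : ¬ WkPref rk X (pY a) a := by
      intro hw
      exact hblk ⟨hacc, Or.inl ⟨hst, hw⟩⟩
    rw [WkPref] at hnw
    push_neg at hnw
    obtain ⟨hm, hlt⟩ := hnw
    have h1 : rk (pY a) (pX (pY a)) < rk (pY a) a := hlt _ (pFn_mem X hXc (pY a))
    have h2 : rk (pY a) a = rk (pY a) (pY (pY a)) := by rw [hYinv]
    exact Set.mem_setOf_eq ▸ (h2 ▸ h1)
  -- counting
  have hfinS : S.Finite := Set.toFinite S
  have hfinT : T.Finite := Set.toFinite T
  have hcard1 : S.ncard ≤ T.ncard :=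
    Set.ncard_le_ncard_of_injOn pX hST (hXinj.injOn) hfinT
  have hcard2 : T.ncard ≤ S.ncard :=
    Set.ncard_le_ncard_of_injOn pY hTS (hYinj.injOn) hfinS
  -- surjectivity: every element of T is pX of an element of S, etc.
  have hsurjX : ∀ b ∈ T, ∃ a, ∃ _ : a ∈ S, b = pX a := by
    apply Set.surj_on_of_inj_on_of_ncard_le (f := fun a _ => pX a) (fun a ha => hST a ha)
      (fun a₁ a₂ _ _ h => hXinj h) hcard2 hfinT
  have hsurjY : ∀ b ∈ S, ∃ a, ∃ _ : a ∈ T, b = pY a := by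
    apply Set.surj_on_of_inj_on_of_ncard_le (f := fun a _ => pY a) (fun a ha => hTS a ha)
      (fun a₁ a₂ _ _ h => hYinj h) hcard1 hfinS
  have hSY : ∀ a ∈ S, pY a ∈ T := by
    intro a ha
    obtain ⟨c, hc, hce⟩ := hsurjY a ha
    have : pY a = c := by rw [hce, hYinv]
    rwa [this]
  have hTX : ∀ a ∈ T, pX a ∈ S := by
    intro a ha
    obtain ⟨c, hc, hce⟩ := hsurjX a ha
    have : pX a = c := by rw [hce, hXinv]
    rwa [this]
  -- conclusion
  intro a b hne hedge
  have haD : a ∈ S ∪ T := by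
    rcases lt_trichotomy (rk a (pX a)) (rk a (pY a)) with h | h | h
    · exact Or.inl h
    · exact absurd h hne
    · exact Or.inr h
  have hb : b = pX a ∨ b = pY a := by
    rcases hedge with h | h
    · exact Or.inl (partner_eq hX.1 hXc h)
    · exact Or.inr (partner_eq hY.1 hYc h)
  have hbD : b ∈ S ∪ T := by
    rcases hb with rfl | rfl
    · rcases haD with h | h
      · exact Or.inr (hST a h)
      · exact Or.inl (hTX a h)
    · rcases haD with h | h
      · exact Or.inr (hSY a h)
      · exact Or.inl (hTS a h)
  rcases hbD with h | h
  · exact ne_of_lt h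
  · exact (ne_of_lt h).symm


/-- Mixing two strongly stable matchings along a closed set of agents. -/
lemma mix {acc : A → A → Prop} {rk : A → A → ℕ} {MA MB : Finset (Sym2 A)}
    (hA : IsStronglyStable acc rk MA) (hB : IsStronglyStable acc rk MB)
    (hAc : IsCompleteM MA) (hBc : IsCompleteM MB)
    (P : A → Prop)
    (hclA : ∀ a b, P a → s(a, b) ∈ MA → P b)
    (hclB : ∀ a b, P a → s(a, b) ∈ MB → P b)
    (hrank : ∀ a b c, P a → s(a, b) ∈ MA → s(a, c) ∈ MB → rk a b = rk a c) :
    ∃ X : Finset (Sym2 A), IsStronglyStable acc rk X ∧ IsCompleteM X ∧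
      (∀ a b c, s(a, b) ∈ MA → s(a, c) ∈ X → rk a b = rk a c) ∧
      (∀ z, z ∈ X ↔ (z ∈ MB ∧ ∃ x ∈ z, P x) ∨ (z ∈ MA ∧ ¬ ∃ x ∈ z, P x)) := by
  classical
  set X := MB.filter (fun z => ∃ x ∈ z, P x) ∪ MA.filter (fun z => ¬ ∃ x ∈ z, P x) with hXdef
  have hmem : ∀ z, z ∈ X ↔ (z ∈ MB ∧ ∃ x ∈ z, P x) ∨ (z ∈ MA ∧ ¬ ∃ x ∈ z, P x) := by
    intro z
    simp [hXdef, Finset.mem_union, Finset.mem_filter]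
  have hPa : ∀ a b, s(a, b) ∈ MB → (∃ x ∈ s(a, b), P x) → P a := by
    rintro a b hab ⟨x, hx, hPx⟩
    rw [Sym2.mem_iff] at hx
    rcases hx with rfl | rfl
    · exact hPx
    · exact hclB x a hPx (by rwa [Sym2.eq_swap])
  have hsr : IsSRMatching acc X := by
    constructor
    · intro a b hab
      rcases (hmem _).mp hab with ⟨h, _⟩ | ⟨h, _⟩
      · exact hB.1.1 a b h
      · exact hA.1.1 a b h
    · intro a b c hb hc
      rcases (hmem _).mp hb with ⟨h1, h1'⟩ | ⟨h1, h1'⟩ <;>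
        rcases (hmem _).mp hc with ⟨h2, h2'⟩ | ⟨h2, h2'⟩
      · exact hB.1.2 a b c h1 h2
      · exact absurd ⟨a, Sym2.mem_mk_left a c, hPa a b h1 h1'⟩ h2'
      · exact absurd ⟨a, Sym2.mem_mk_left a b, hPa a c h2 h2'⟩ h1'
      · exact hA.1.2 a b c h1 h2
  have hXc : IsCompleteM X := by
    intro a
    by_cases hPA : P a
    · exact ⟨pFn MB hBc a, (hmem _).mpr (Or.inl ⟨pFn_mem MB hBc a,
        ⟨a, Sym2.mem_mk_left _ _, hPA⟩⟩)⟩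
    · refine ⟨pFn MA hAc a, (hmem _).mpr (Or.inr ⟨pFn_mem MA hAc a, ?_⟩)⟩
      rintro ⟨x, hx, hPx⟩
      rw [Sym2.mem_iff] at hx
      rcases hx with rfl | rfl
      · exact hPA hPx
      · exact hPA (hclA _ a hPx (by rw [Sym2.eq_swap]; exact pFn_mem MA hAc a))
  have hvec : ∀ a b c, s(a, b) ∈ MA → s(a, c) ∈ X → rk a b = rk a c := by
    intro a b c hab hc
    rcases (hmem _).mp hc with ⟨h, h'⟩ | ⟨h, _⟩
    · exact hrank a b c (hPa a c h h') hab h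
    · rw [hA.1.2 a b c hab h]
  exact ⟨X, transfer hA hAc hsr hXc hvec, hXc, hvec, hmem⟩

end Main



/-- Let `𝓜` be an equivalence class (represented by `M₀`) containing
a forced-respecting matching, and `F` a minimal set of pairs such that every
forced-respecting matching of `𝓜` contains a pair of `F`. Then for every equivalence
class `𝓜'` (represented by a forced-respecting `M'`) containing some pair `e ∈ F`,
and every pair `e' ∈ F`, there is a forced-respecting matching `M'' ∈ 𝓜'` with `e' ∈ M''`. -/
theorem stmt14 {A : Type*} [DecidableEq A]
    (acc : A → A → Prop)
    (hirr : ∀ a, ¬ acc a a)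
    (hsym : ∀ a b, acc a b → acc b a)
    (rk : A → A → ℕ)
    (hcomplete : ∀ M, IsStronglyStable acc rk M → IsCompleteM M)
    (Q : Finset (Sym2 A))
    (M₀ : Finset (Sym2 A)) (hM₀ : IsStronglyStable acc rk M₀)
    (hex : ∃ N, IsStronglyStable acc rk N ∧ REquiv rk M₀ N ∧ Q ⊆ N)
    (F : Finset (Sym2 A))
    (hF : ∀ N, IsStronglyStable acc rk N → REquiv rk M₀ N → Q ⊆ N → ∃ e ∈ F, e ∈ N)
    (hFmin : ∀ F' ⊂ F, ∃ N, IsStronglyStable acc rk N ∧ REquiv rk M₀ N ∧ Q ⊆ N ∧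
        ∀ e ∈ F', e ∉ N) :
    ∀ M', IsStronglyStable acc rk M' → Q ⊆ M' → (∃ e ∈ F, e ∈ M') →
      ∀ e' ∈ F, ∃ M'', IsStronglyStable acc rk M'' ∧ REquiv rk M' M'' ∧ Q ⊆ M'' ∧
        e' ∈ M'' := by
  classical
  intro M' hM' hQM' hEe e' he'F
  obtain ⟨e, heF, heM'⟩ := hEe
  by_cases he'M' : e' ∈ M'
  · exact ⟨M', hM', fun a b c hb hc => by rw [hM'.1.2 a b c hb hc], hQM', he'M'⟩
  have hc0 := hcomplete M₀ hM₀
  have hc' := hcomplete M' hM'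
  haveI : Finite A := finite_of_complete hc0
  -- N1 : matching in the class of M₀ whose only F-pair is e
  obtain ⟨N1, hN1, hN1eq, hQ1, hav1⟩ := hFmin (F.erase e) (Finset.erase_ssubset heF)
  have hc1 := hcomplete N1 hN1
  have hN1F : ∀ f ∈ F, f ∈ N1 → f = e := by
    intro f hf hfN
    by_contra hne
    exact hav1 f (Finset.mem_erase.mpr ⟨hne, hf⟩) hfN
  have heN1 : e ∈ N1 := by
    obtain ⟨f, hfF, hfN⟩ := hF N1 hN1 hN1eq hQ1
    rwa [hN1F f hfF hfN] at hfN
  -- N2 : matching in the class of M₀ whose only F-pair is e'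
  obtain ⟨N2, hN2, hN2eq, hQ2, hav2⟩ := hFmin (F.erase e') (Finset.erase_ssubset he'F)
  have hc2 := hcomplete N2 hN2
  have hN2F : ∀ f ∈ F, f ∈ N2 → f = e' := by
    intro f hf hfN
    by_contra hne
    exact hav2 f (Finset.mem_erase.mpr ⟨hne, hf⟩) hfN
  have he'N2 : e' ∈ N2 := by
    obtain ⟨f, hfF, hfN⟩ := hF N2 hN2 hN2eq hQ2
    rwa [hN2F f hfF hfN] at hfN
  have hee' : e ≠ e' := fun h => he'M' (h ▸ heM')
  -- destructure the two pairs
  obtain ⟨u, v, rfl⟩ : ∃ x y, e = s(x, y) := Sym2.ind (fun x y => ⟨x, y, rfl⟩) e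
  obtain ⟨u', v', rfl⟩ : ∃ x y, e' = s(x, y) := Sym2.ind (fun x y => ⟨x, y, rfl⟩) e'
  -- rank vector of the class of M₀
  set r₀ : A → ℕ := fun a => rk a (pFn M₀ hc0 a) with hr₀
  have hveq1 : ∀ a, rk a (pFn N1 hc1 a) = r₀ a :=
    fun a => (hN1eq a _ _ (pFn_mem M₀ hc0 a) (pFn_mem N1 hc1 a)).symm
  have hveq2 : ∀ a, rk a (pFn N2 hc2 a) = r₀ a :=
    fun a => (hN2eq a _ _ (pFn_mem M₀ hc0 a) (pFn_mem N2 hc2 a)).symm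
  -- connectivity in N1 ∪ N2
  set rel : A → A → Prop := fun a b => s(a, b) ∈ N1 ∨ s(a, b) ∈ N2 with hreldef
  have hrelsymm : ∀ a b, rel a b → rel b a := by
    intro a b h
    rcases h with h | h
    · exact Or.inl (by rwa [Sym2.eq_swap])
    · exact Or.inr (by rwa [Sym2.eq_swap])
  set comp : A → Prop := fun x => Relation.ReflTransGen rel u x with hcompdef
  have hclcomp : ∀ a b, comp a → rel a b → comp b :=
    fun a b ha hab => Relation.ReflTransGen.tail ha hab
  -- Step A : u' is in the component of u
  have hu' : comp u' := by
    by_contra hnc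
    obtain ⟨Z, hZ, hZc, hZvec, hZmem⟩ := mix hN1 hN2 hc1 hc2 comp
      (fun a b ha hab => hclcomp a b ha (Or.inl hab))
      (fun a b ha hab => hclcomp a b ha (Or.inr hab))
      (fun a b c _ hb hc => by
        rw [partner_eq hN1.1 hc1 hb, partner_eq hN2.1 hc2 hc, hveq1, hveq2])
    have hZeq : REquiv rk M₀ Z := by
      intro a b c hb hc
      rw [partner_eq hM₀.1 hc0 hb]
      have := hZvec a _ c (pFn_mem N1 hc1 a) hc
      rw [hveq1] at this
      rw [← this, hr₀]
    have hQZ : Q ⊆ Z := by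
      intro q hq
      obtain ⟨x, y, rfl⟩ : ∃ x y, q = s(x, y) := Sym2.ind (fun x y => ⟨x, y, rfl⟩) q
      by_cases hx : ∃ w ∈ s(x, y), comp w
      · exact (hZmem _).mpr (Or.inl ⟨hQ2 hq, hx⟩)
      · exact (hZmem _).mpr (Or.inr ⟨hQ1 hq, hx⟩)
    obtain ⟨f, hfF, hfZ⟩ := hF Z hZ hZeq hQZ
    rcases (hZmem f).mp hfZ with ⟨hfB, hfx⟩ | ⟨hfA, hfx⟩
    · have hfe' : f = s(u', v') := hN2F f hfF hfB
      subst hfe'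
      obtain ⟨x, hx, hcompx⟩ := hfx
      rw [Sym2.mem_iff] at hx
      rcases hx with rfl | rfl
      · exact hnc hcompx
      · exact hnc (hclcomp _ _ hcompx (Or.inr (by rwa [Sym2.eq_swap])))
    · have hfe : f = s(u, v) := hN1F f hfF hfA
      subst hfe
      exact hfx ⟨u, Sym2.mem_mk_left _ _, Relation.ReflTransGen.refl⟩
  -- Step B : every agent in the component has M'-rank equal to r₀
  have hD1 := disagree_closed hM' hN1 hc' hc1
  have hD2 := disagree_closed hM' hN2 hc' hc2
  have hDiff : ∀ a b, rk a (pFn M' hc' a) ≠ r₀ a → rel a b →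
      rk b (pFn M' hc' b) ≠ r₀ b := by
    intro a b hne hr
    rcases hr with h | h
    · have := hD1 a b (by rw [hveq1]; exact hne) (Or.inr h)
      rwa [hveq1] at this
    · have := hD2 a b (by rw [hveq2]; exact hne) (Or.inr h)
      rwa [hveq2] at this
  have hagree : ∀ x, comp x → rk x (pFn M' hc' x) = r₀ x := by
    intro x hx
    induction hx with
    | refl =>
      rw [← partner_eq hM'.1 hc' heM', ← hveq1, ← partner_eq hN1.1 hc1 heN1]
    | tail h1 h2 ih =>
      by_contra hne
      exact hDiff _ _ hne (hrelsymm _ _ h2) ih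
  -- Step C : the component of u' in M' ∪ N2 is all-indifferent
  set rel2 : A → A → Prop := fun a b => s(a, b) ∈ M' ∨ s(a, b) ∈ N2 with hrel2def
  have hrel2symm : ∀ a b, rel2 a b → rel2 b a := by
    intro a b h
    rcases h with h | h
    · exact Or.inl (by rwa [Sym2.eq_swap])
    · exact Or.inr (by rwa [Sym2.eq_swap])
  set comp2 : A → Prop := fun x => Relation.ReflTransGen rel2 u' x with hcomp2def
  have hagree2 : ∀ x, comp2 x → rk x (pFn M' hc' x) = rk x (pFn N2 hc2 x) := by
    intro x hx
    induction hx with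
    | refl => rw [hveq2]; exact hagree u' hu'
    | tail h1 h2 ih =>
      by_contra hne
      exact hD2 _ _ hne (hrel2symm _ _ h2) ih
  -- Step D : mix M' and N2 along comp2
  obtain ⟨X, hX, hXc, hXvec, hXmem⟩ := mix hM' hN2 hc' hc2 comp2
    (fun a b ha hab => Relation.ReflTransGen.tail ha (Or.inl hab))
    (fun a b ha hab => Relation.ReflTransGen.tail ha (Or.inr hab))
    (fun a b c ha hb hc => by
      rw [partner_eq hM'.1 hc' hb, partner_eq hN2.1 hc2 hc]
      exact hagree2 a ha)
  refine ⟨X, hX, hXvec, ?_, ?_⟩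
  · intro q hq
    obtain ⟨x, y, rfl⟩ : ∃ x y, q = s(x, y) := Sym2.ind (fun x y => ⟨x, y, rfl⟩) q
    by_cases hx : ∃ w ∈ s(x, y), comp2 w
    · exact (hXmem _).mpr (Or.inl ⟨hQ2 hq, hx⟩)
    · exact (hXmem _).mpr (Or.inr ⟨hQM' hq, hx⟩)
  · exact (hXmem _).mpr (Or.inl ⟨he'N2,
      ⟨u', Sym2.mem_mk_left _ _, Relation.ReflTransGen.refl⟩⟩)
end

section
/- Consider a Strongly Stable Roommates with Ties instance in which every strongly stable matching is complete, together with a set Q of forced pairs; call a strongly stable matching forced-respecting if it contains every pair of Q. Let 𝓜 be an equivalence class of strongly stable matchings and let F be a minimal set of pairs such that every forced-respecting matching of 𝓜 contains at least one pair of F. Then for every equivalence class 𝓜' that contains at least one forced-respecting matching disjoint from F, and for every agent a incident to a pair of F, the rank rk_a(𝓜') differs from rk_a(𝓜); that is, in all matchings from 𝓜' every agent incident to a pair from F is matched with a different rank than in 𝓜. -/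
private lemma strictProp {A : Type*} [DecidableEq A] {acc : A → A → Prop} {rk : A → A → ℕ}
    {M N : Finset (Sym2 A)}
    (hM : IsStronglyStable acc rk M) (hN : IsStronglyStable acc rk N)
    {x y z w : A} (hxy : s(x,y) ∈ M) (hxz : s(x,z) ∈ N)
    (hlt : rk x y < rk x z) (hyw : s(y,w) ∈ N) : rk y w < rk y x := by
  by_contra hcon
  push_neg at hcon
  exact hN.2 x y ⟨hM.1.1 x y hxy, Or.inl ⟨Or.inr ⟨z, hxz, hlt⟩, Or.inr ⟨w, hyw, hcon⟩⟩⟩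

private lemma indiffProp {A : Type*} [DecidableEq A] {acc : A → A → Prop} {rk : A → A → ℕ}
    {M N : Finset (Sym2 A)}
    (hM : IsStronglyStable acc rk M) (hN : IsStronglyStable acc rk N)
    (hMc : IsCompleteM M) (hNc : IsCompleteM N)
    {x y z w : A} (hxy : s(x,y) ∈ M) (hxz : s(x,z) ∈ N)
    (heq : rk x y = rk x z) (hyw : s(y,w) ∈ N) : rk y w = rk y x := by
  have hswap : ∀ (P : Finset (Sym2 A)) (u v : A), s(u,v) ∈ P → s(v,u) ∈ P := by
    intro P u v h; rwa [Sym2.eq_swap]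
  have hle : rk y w ≤ rk y x := by
    by_contra hcon
    push_neg at hcon
    exact hN.2 x y ⟨hM.1.1 x y hxy,
      Or.inr ⟨Or.inr ⟨z, hxz, heq.le⟩, Or.inr ⟨w, hyw, hcon⟩⟩⟩
  rcases hle.lt_or_eq with hlt | h
  · exfalso
    have hfin : Finite A := by
      have hsub : (Set.univ : Set A) ⊆ ⋃ e ∈ (M : Set (Sym2 A)), {v : A | v ∈ e} := by
        intro v _
        obtain ⟨u, hu⟩ := hMc v
        exact Set.mem_biUnion hu (Sym2.mem_mk_left v u)
      have hf : (⋃ e ∈ (M : Set (Sym2 A)), {v : A | v ∈ e}).Finite := by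
        refine Set.Finite.biUnion M.finite_toSet fun e _ => ?_
        induction e using Sym2.ind with
        | _ u v =>
          have hss : {t : A | t ∈ s(u,v)} ⊆ ({u, v} : Set A) := by
            intro t ht
            simpa using Sym2.mem_iff.mp ht
          exact (Set.toFinite ({u, v} : Set A)).subset hss
      exact Set.finite_univ_iff.mp (hf.subset hsub)
    haveI := hfin
    have hMc' : ∀ v : A, ∃ u, s(v,u) ∈ M := hMc
    have hNc' : ∀ v : A, ∃ u, s(v,u) ∈ N := hNc
    choose pM hpM using hMc'
    choose pN hpN using hNc'
    have pMeq : ∀ u v, s(u,v) ∈ M → pM u = v := fun u v h => hM.1.2 u (pM u) v (hpM u) h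
    have pNeq : ∀ u v, s(u,v) ∈ N → pN u = v := fun u v h => hN.1.2 u (pN u) v (hpN u) h
    have pMinv : ∀ v, pM (pM v) = v := fun v => pMeq (pM v) v (hswap M v (pM v) (hpM v))
    have pNinv : ∀ v, pN (pN v) = v := fun v => pNeq (pN v) v (hswap N v (pN v) (hpN v))
    set σ : A → A := fun v => pN (pM v) with hσdef
    have hσinj : Function.Injective σ := by
      intro u v h
      simp only [hσdef] at h
      have h1 : pM u = pM v := by
        have h2 := congrArg pN h
        rwa [pNinv, pNinv] at h2
      have h3 := congrArg pM h1
      rwa [pMinv, pMinv] at h3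
    have hstep : ∀ v, rk v (pM v) < rk v (pN v) →
        rk (σ v) (pM (σ v)) < rk (σ v) (pN (σ v)) := by
      intro v hv
      have h1 : rk (pM v) (pN (pM v)) < rk (pM v) v :=
        strictProp hM hN (hpM v) (hpN v) hv (hpN (pM v))
      have h2 : rk (pN (pM v)) (pM (pN (pM v))) < rk (pN (pM v)) (pM v) :=
        strictProp hN hM (hpN (pM v)) (hswap M v (pM v) (hpM v)) h1 (hpM (pN (pM v)))
      simp only [hσdef]
      rwa [pNinv (pM v)]
    have hiter : ∀ (k : ℕ) (v : A), rk v (pM v) < rk v (pN v) →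
        rk (σ^[k] v) (pM (σ^[k] v)) < rk (σ^[k] v) (pN (σ^[k] v)) := by
      intro k
      induction k with
      | zero => intro v hv; simpa using hv
      | succ n ih =>
        intro v hv
        rw [Function.iterate_succ_apply]
        exact ih (σ v) (hstep v hv)
    have hpNy : pN y = w := pNeq y w hyw
    have hPw : rk w (pM w) < rk w (pN w) := by
      have h2 : rk w (pM w) < rk w y :=
        strictProp hN hM hyw (hswap M x y hxy) hlt (hpM w)
      have h3 : pN w = y := by rw [← hpNy, pNinv]
      rwa [h3]
    have hσx : σ x = w := by simp only [hσdef]; rw [pMeq x y hxy, hpNy]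
    have key : ∀ i j : ℕ, i < j → σ^[i] w = σ^[j] w → False := by
      intro i j hij' heq'
      set m := j - i with hm
      have hm1 : 1 ≤ m := by omega
      have hj : j = i + m := by omega
      have h4 : σ^[i] (σ^[m] w) = σ^[i] w := by
        rw [← Function.iterate_add_apply, ← hj, heq']
      have hper : σ^[m] w = w := (hσinj.iterate i) h4
      have hx' : σ^[m-1] w = x := by
        apply hσinj
        have hstep2 : σ (σ^[m-1] w) = σ^[m] w := by
          rw [← Function.iterate_succ_apply' σ (m-1) w]
          congr 1
          omega
        rw [hσx, hstep2]
        exact hper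
      have hPx := hiter (m-1) w hPw
      rw [hx'] at hPx
      rw [pMeq x y hxy, pNeq x z hxz] at hPx
      omega
    obtain ⟨i, j, hij, hfij⟩ := Finite.exists_ne_map_eq_of_infinite (fun k : ℕ => σ^[k] w)
    rcases lt_or_gt_of_ne hij with h' | h'
    · exact key i j h' hfij
    · exact key j i h' hfij.symm
  · exact h

/-- Let `𝓜` be an equivalence class (represented by `M₀`) and `F` a
minimal set of pairs such that every forced-respecting matching of `𝓜` contains a
pair of `F`. Then in every equivalence class `𝓜'` (represented by a forced-respecting
matching `M'` disjoint from `F`), every agent incident to a pair of `F` is matched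
with a different rank than in `𝓜` (in all matchings `N ∈ 𝓜'`). -/
theorem stmt15 {A : Type*} [DecidableEq A]
    (acc : A → A → Prop)
    (hirr : ∀ a, ¬ acc a a)
    (hsym : ∀ a b, acc a b → acc b a)
    (rk : A → A → ℕ)
    (hcomplete : ∀ M, IsStronglyStable acc rk M → IsCompleteM M)
    (Q : Finset (Sym2 A))
    (M₀ : Finset (Sym2 A)) (hM₀ : IsStronglyStable acc rk M₀)
    (F : Finset (Sym2 A))
    (hF : ∀ N, IsStronglyStable acc rk N → REquiv rk M₀ N → Q ⊆ N → ∃ e ∈ F, e ∈ N)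
    (hFmin : ∀ F' ⊂ F, ∃ N, IsStronglyStable acc rk N ∧ REquiv rk M₀ N ∧ Q ⊆ N ∧
        ∀ e ∈ F', e ∉ N) :
    ∀ M', IsStronglyStable acc rk M' → Q ⊆ M' → (∀ e ∈ F, e ∉ M') →
      ∀ N, IsStronglyStable acc rk N → REquiv rk M' N →
        ∀ a, (∃ e ∈ F, a ∈ e) →
          ∀ b c, s(a, b) ∈ N → s(a, c) ∈ M₀ → rk a b ≠ rk a c := by
  classical
  intro M' hM' hQM' hFM' N hN hM'N a ha b c hab hac heq
  obtain ⟨e₀, he₀F, hae₀⟩ := ha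
  obtain ⟨w, rfl⟩ : ∃ w, e₀ = s(a, w) := ⟨Sym2.Mem.other hae₀, (Sym2.other_spec hae₀).symm⟩
  have hswap : ∀ (P : Finset (Sym2 A)) (u v : A), s(u,v) ∈ P → s(v,u) ∈ P := by
    intro P u v h; rwa [Sym2.eq_swap]
  -- matchings completeness
  have hM'c : IsCompleteM M' := hcomplete M' hM'
  -- the matching N₁ avoiding F ∖ {e₀}
  obtain ⟨N₁, hN₁, hM₀N₁, hQN₁, hN₁F⟩ := hFmin (F.erase (s(a,w))) (Finset.erase_ssubset he₀F)
  have hN₁c : IsCompleteM N₁ := hcomplete N₁ hN₁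
  -- base indifference at a between M' and N₁
  have hbase : ∀ u v, s(a,u) ∈ M' → s(a,v) ∈ N₁ → rk a u = rk a v := by
    intro u v hu hv
    have h1 : rk a u = rk a b := hM'N a u b hu hab
    have h2 : rk a c = rk a v := hM₀N₁ a c v hac hv
    omega
  -- the component of a in M' ∪ N₁
  set R : A → A → Prop := fun x y => s(x,y) ∈ M' ∨ s(x,y) ∈ N₁ with hRdef
  set inS : A → Prop := fun x => Relation.ReflTransGen R a x with hSdef
  have haS : inS a := Relation.ReflTransGen.refl
  have hcl : ∀ x y, R x y → inS x → inS y := fun x y h hx => Relation.ReflTransGen.tail hx h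
  -- indifference on the whole component
  have hindiff : ∀ x, inS x → ∀ u v, s(x,u) ∈ M' → s(x,v) ∈ N₁ → rk x u = rk x v := by
    intro x hx
    simp only [hSdef] at hx
    induction hx with
    | refl => exact hbase
    | @tail y x' hay hyx ih =>
      intro u v hu hv
      obtain ⟨zN, hzN⟩ := hN₁c y
      obtain ⟨zM, hzM⟩ := hM'c y
      rcases hyx with hMe | hNe
      · have hu' : u = y := hM'.1.2 x' u y hu (hswap M' y x' hMe)
        have h1 : rk y x' = rk y zN := ih x' zN hMe hzN
        have h2 : rk x' v = rk x' y := indiffProp hM' hN₁ hM'c hN₁c hMe hzN h1 hv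
        rw [hu']
        exact h2.symm
      · have hv' : v = y := hN₁.1.2 x' v y hv (hswap N₁ y x' hNe)
        have h1 : rk y x' = rk y zM := (ih zM x' hzM hNe).symm
        have h2 : rk x' u = rk x' y := indiffProp hN₁ hM' hN₁c hM'c hNe hzM h1 hu
        rw [hv']
        exact h2
  -- the swapped matching
  set N'' : Finset (Sym2 A) :=
    (M'.filter (fun e => ∀ x ∈ e, inS x)) ∪ (N₁.filter (fun e => ∀ x ∈ e, ¬ inS x))
    with hN''def
  have hmem : ∀ x u, s(x,u) ∈ N'' ↔ ((inS x ∧ s(x,u) ∈ M') ∨ (¬ inS x ∧ s(x,u) ∈ N₁)) := by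
    intro x u
    constructor
    · intro h
      rcases Finset.mem_union.mp h with h | h
      · obtain ⟨hm, hcond⟩ := Finset.mem_filter.mp h
        exact Or.inl ⟨hcond x (Sym2.mem_mk_left x u), hm⟩
      · obtain ⟨hm, hcond⟩ := Finset.mem_filter.mp h
        exact Or.inr ⟨hcond x (Sym2.mem_mk_left x u), hm⟩
    · intro h
      rcases h with ⟨hx, he⟩ | ⟨hx, he⟩
      · refine Finset.mem_union_left _ (Finset.mem_filter.mpr ⟨he, ?_⟩)
        intro t ht
        rcases Sym2.mem_iff.mp ht with rfl | rfl
        · exact hx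
        · exact hcl x t (Or.inl he) hx
      · refine Finset.mem_union_right _ (Finset.mem_filter.mpr ⟨he, ?_⟩)
        intro t ht
        rcases Sym2.mem_iff.mp ht with rfl | rfl
        · exact hx
        · intro htS
          exact hx (hcl t x (Or.inr (hswap N₁ x t he)) htS)
  -- N'' is a complete matching
  have hN''c : ∀ x : A, ∃ u, s(x,u) ∈ N'' := by
    intro x
    by_cases hx : inS x
    · obtain ⟨u, hu⟩ := hM'c x
      exact ⟨u, (hmem x u).mpr (Or.inl ⟨hx, hu⟩)⟩
    · obtain ⟨u, hu⟩ := hN₁c x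
      exact ⟨u, (hmem x u).mpr (Or.inr ⟨hx, hu⟩)⟩
  -- rank preservation relative to N₁
  have hrank : ∀ x u v, s(x,u) ∈ N'' → s(x,v) ∈ N₁ → rk x u = rk x v := by
    intro x u v hu hv
    rcases (hmem x u).mp hu with ⟨hx, hu'⟩ | ⟨hx, hu'⟩
    · exact hindiff x hx u v hu' hv
    · rw [hN₁.1.2 x u v hu' hv]
  -- N'' is strongly stable
  have hstable'' : IsStronglyStable acc rk N'' := by
    refine ⟨⟨?_, ?_⟩, ?_⟩
    · intro p q h
      rcases (hmem p q).mp h with ⟨_, h'⟩ | ⟨_, h'⟩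
      · exact hM'.1.1 p q h'
      · exact hN₁.1.1 p q h'
    · intro p q r hq hr
      rcases (hmem p q).mp hq with ⟨hp, hq'⟩ | ⟨hp, hq'⟩ <;>
        rcases (hmem p r).mp hr with ⟨hp2, hr'⟩ | ⟨hp2, hr'⟩
      · exact hM'.1.2 p q r hq' hr'
      · exact absurd hp hp2
      · exact absurd hp2 hp
      · exact hN₁.1.2 p q r hq' hr'
    · intro p q hblk
      obtain ⟨hacc, hcase⟩ := hblk
      have hSt : ∀ r s : A, StPref rk N'' r s → StPref rk N₁ r s := by
        intro r s h
        rcases h with h | ⟨t, ht, hlt⟩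
        · exact absurd (hN''c r) h
        · obtain ⟨t', ht'⟩ := hN₁c r
          exact Or.inr ⟨t', ht', by rw [← hrank r t t' ht ht']; exact hlt⟩
      have hWk : ∀ r s : A, WkPref rk N'' r s → WkPref rk N₁ r s := by
        intro r s h
        rcases h with h | ⟨t, ht, hle⟩
        · exact absurd (hN''c r) h
        · obtain ⟨t', ht'⟩ := hN₁c r
          exact Or.inr ⟨t', ht', by rw [← hrank r t t' ht ht']; exact hle⟩
      apply hN₁.2 p q
      refine ⟨hacc, ?_⟩
      rcases hcase with ⟨h1, h2⟩ | ⟨h1, h2⟩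
      · exact Or.inl ⟨hSt p q h1, hWk q p h2⟩
      · exact Or.inr ⟨hWk p q h1, hSt q p h2⟩
  -- N'' is equivalent to M₀
  have hEq : REquiv rk M₀ N'' := by
    intro x p q hp hq
    obtain ⟨v, hv⟩ := hN₁c x
    have h1 : rk x p = rk x v := hM₀N₁ x p v hp hv
    have h2 : rk x q = rk x v := hrank x q v hq hv
    omega
  -- N'' contains Q
  have hQ'' : Q ⊆ N'' := by
    intro q
    induction q using Sym2.ind with
    | _ u v =>
      intro hq
      by_cases hu : inS u
      · exact (hmem u v).mpr (Or.inl ⟨hu, hQM' hq⟩)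
      · exact (hmem u v).mpr (Or.inr ⟨hu, hQN₁ hq⟩)
  -- final contradiction with hF
  obtain ⟨f, hfF, hfN''⟩ := hF N'' hstable'' hEq hQ''
  rcases Finset.mem_union.mp hfN'' with h | h
  · obtain ⟨hm, _⟩ := Finset.mem_filter.mp h
    exact hFM' f hfF hm
  · obtain ⟨hm, hcond⟩ := Finset.mem_filter.mp h
    have hfe : f = s(a,w) := by
      by_contra hne
      exact hN₁F f (Finset.mem_erase.mpr ⟨hne, hfF⟩) hm
    subst hfe
    exact hcond a (Sym2.mem_mk_left a w) haS
end

section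
/- Consider a Strongly Stable Roommates with Ties instance in which every strongly stable matching is complete, together with a set Q of forced pairs; call a strongly stable matching forced-respecting if it contains every pair of Q. Let 𝓜 be an equivalence class of strongly stable matchings containing a forced-respecting matching, and let F be a minimal set of pairs such that every forced-respecting matching from 𝓜 contains at least one pair of F. If 𝓜 also contains a strongly stable matching M^d that is disjoint from F, then no forced-respecting matching of the instance is disjoint from F. -/
section Aux
variable {A : Type*}

lemma sr_prop_weak (acc : A → A → Prop) (rk : A → A → ℕ)
    {M N : Finset (Sym2 A)} {g h : A → A}
    (hN : IsStronglyStable acc rk N)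
    (haccM : ∀ a b : A, s(a, b) ∈ M → acc a b)
    (hg : ∀ x, s(x, g x) ∈ M) (hh : ∀ x, s(x, h x) ∈ N)
    (a : A) (hab : rk a (g a) ≤ rk a (h a)) :
    rk (g a) (h (g a)) ≤ rk (g a) a := by
  have hacc : acc a (g a) := haccM a (g a) (hg a)
  have hwk : WkPref rk N a (g a) := Or.inr ⟨h a, hh a, hab⟩
  have hnst : ¬ StPref rk N (g a) a := fun hst => hN.2 a (g a) ⟨hacc, Or.inr ⟨hwk, hst⟩⟩
  simp only [StPref, not_or, not_exists, not_and, not_lt] at hnst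
  exact hnst.2 (h (g a)) (hh (g a))

lemma sr_prop_strict (acc : A → A → Prop) (rk : A → A → ℕ)
    {M N : Finset (Sym2 A)} {g h : A → A}
    (hN : IsStronglyStable acc rk N)
    (haccM : ∀ a b : A, s(a, b) ∈ M → acc a b)
    (hg : ∀ x, s(x, g x) ∈ M) (hh : ∀ x, s(x, h x) ∈ N)
    (a : A) (hab : rk a (g a) < rk a (h a)) :
    rk (g a) (h (g a)) < rk (g a) a := by
  have hacc : acc a (g a) := haccM a (g a) (hg a)
  have hst : StPref rk N a (g a) := Or.inr ⟨h a, hh a, hab⟩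
  have hnwk : ¬ WkPref rk N (g a) a := fun hwk => hN.2 a (g a) ⟨hacc, Or.inl ⟨hst, hwk⟩⟩
  simp only [WkPref, not_or, not_exists, not_and, not_le] at hnwk
  exact hnwk.2 (h (g a)) (hh (g a))

lemma sr_invol {M : Finset (Sym2 A)} {g : A → A}
    (huniq : ∀ a b c : A, s(a, b) ∈ M → s(a, c) ∈ M → b = c)
    (hg : ∀ x, s(x, g x) ∈ M) : Function.Involutive g := by
  intro a
  have h1 : s(g a, a) ∈ M := by rw [Sym2.eq_swap]; exact hg a
  exact huniq (g a) (g (g a)) a (hg (g a)) h1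

lemma sr_indiff_step [Finite A] (acc : A → A → Prop) (rk : A → A → ℕ)
    {M N : Finset (Sym2 A)} {g h : A → A}
    (hM : IsStronglyStable acc rk M) (hN : IsStronglyStable acc rk N)
    (hg : ∀ x, s(x, g x) ∈ M) (hh : ∀ x, s(x, h x) ∈ N)
    (a : A) (ha : rk a (g a) = rk a (h a)) :
    rk (g a) (g (g a)) = rk (g a) (h (g a)) := by
  have ginv : Function.Involutive g := sr_invol hM.1.2 hg
  have hinv : Function.Involutive h := sr_invol hN.1.2 hh
  have hle : rk (g a) (h (g a)) ≤ rk (g a) a :=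
    sr_prop_weak acc rk hN hM.1.1 hg hh a ha.le
  rw [ginv a]
  -- goal : rk (g a) a = rk (g a) (h (g a))
  have hcontra : ¬ rk (g a) (h (g a)) < rk (g a) a := by
    intro h0
    set τ : A → A := fun x => g (h x) with hτ
    have hP0 : rk (g a) (h (g a)) < rk (g a) (g (g a)) := by rw [ginv a]; exact h0
    have hPiter : ∀ k, rk (τ^[k] (g a)) (h (τ^[k] (g a))) < rk (τ^[k] (g a)) (g (τ^[k] (g a))) := by
      intro k
      induction k with
      | zero => simpa using hP0
      | succ k ih =>
        set x := τ^[k] (g a) with hx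
        have s1 : rk (h x) (g (h x)) < rk (h x) x :=
          sr_prop_strict acc rk hM hN.1.1 hh hg x ih
        have s1' : rk (h x) (g (h x)) < rk (h x) (h (h x)) := by rw [hinv x]; exact s1
        have s2 : rk (g (h x)) (h (g (h x))) < rk (g (h x)) (h x) :=
          sr_prop_strict acc rk hN hM.1.1 hg hh (h x) s1'
        have s2' : rk (g (h x)) (h (g (h x))) < rk (g (h x)) (g (g (h x))) := by
          rw [ginv (h x)]; exact s2
        rw [Function.iterate_succ_apply']
        exact s2'
    have hτinj : Function.Injective τ := ginv.injective.comp hinv.injective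
    obtain ⟨k, l, hkl, heq⟩ : ∃ k l : ℕ, k < l ∧ τ^[k] (g a) = τ^[l] (g a) := by
      obtain ⟨k, l, hne, he⟩ := Finite.exists_ne_map_eq_of_infinite (fun k : ℕ => τ^[k] (g a))
      rcases hne.lt_or_gt with hlt | hlt
      · exact ⟨k, l, hlt, he⟩
      · exact ⟨l, k, hlt, he.symm⟩
    have hm : τ^[l - k] (g a) = g a := by
      have h1 : τ^[k + (l - k)] (g a) = τ^[k] (τ^[l - k] (g a)) :=
        Function.iterate_add_apply τ k (l - k) (g a)
      have h2 : k + (l - k) = l := by omega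
      rw [h2] at h1
      exact (hτinj.iterate k) (h1.symm.trans heq.symm)
    have hm1 : 1 ≤ l - k := by omega
    set x := τ^[l - k - 1] (g a) with hxdef
    have hτx : τ x = g a := by
      rw [hxdef, ← Function.iterate_succ_apply' τ (l - k - 1) (g a)]
      have he : (l - k - 1).succ = l - k := by omega
      rw [he]; exact hm
    have hhx : h x = a := by
      have h1 : g (h x) = g a := hτx
      have := congrArg g h1
      rw [ginv (h x), ginv a] at this
      exact this
    have hPx := hPiter (l - k - 1)
    have s1 : rk (h x) (g (h x)) < rk (h x) x :=
      sr_prop_strict acc rk hM hN.1.1 hh hg x hPx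
    have hxa : x = h a := by rw [← hhx, hinv]
    rw [hhx, hxa] at s1
    -- s1 : rk a (g a) < rk a (h a)
    omega
  exact le_antisymm (not_lt.mp hcontra) hle

inductive SRReach {A : Type*} (g h : A → A) (seed : A → Prop) : A → Prop
  | base {a : A} : seed a → SRReach g h seed a
  | stepg {a : A} : SRReach g h seed a → SRReach g h seed (g a)
  | steph {a : A} : SRReach g h seed a → SRReach g h seed (h a)

end Aux

/-- Let `𝓜` be an equivalence class (represented by `M₀`) containing
a forced-respecting matching, and `F` a minimal set of pairs such that every
forced-respecting matching of `𝓜` contains a pair of `F`. If `𝓜` also contains a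
strongly stable matching `Md` disjoint from `F`, then no forced-respecting matching
of the instance is disjoint from `F`. -/
theorem stmt16 {A : Type*} [DecidableEq A]
    (acc : A → A → Prop)
    (hirr : ∀ a, ¬ acc a a)
    (hsym : ∀ a b, acc a b → acc b a)
    (rk : A → A → ℕ)
    (hcomplete : ∀ M, IsStronglyStable acc rk M → IsCompleteM M)
    (Q : Finset (Sym2 A))
    (M₀ : Finset (Sym2 A)) (hM₀ : IsStronglyStable acc rk M₀)
    (hex : ∃ N, IsStronglyStable acc rk N ∧ REquiv rk M₀ N ∧ Q ⊆ N)
    (F : Finset (Sym2 A))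
    (hF : ∀ N, IsStronglyStable acc rk N → REquiv rk M₀ N → Q ⊆ N → ∃ e ∈ F, e ∈ N)
    (hFmin : ∀ F' ⊂ F, ∃ N, IsStronglyStable acc rk N ∧ REquiv rk M₀ N ∧ Q ⊆ N ∧
        ∀ e ∈ F', e ∉ N)
    (Md : Finset (Sym2 A)) (hMd : IsStronglyStable acc rk Md)
    (hMdeq : REquiv rk M₀ Md)
    (hMdF : ∀ e ∈ F, e ∉ Md) :
    ∀ N, IsStronglyStable acc rk N → Q ⊆ N → ∃ e ∈ F, e ∈ N := by
  classical
  intro N hN hQN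
  by_contra hcon
  push_neg at hcon
  obtain ⟨N₀, hN₀, hN₀eq, hQN₀⟩ := hex
  have cMd := hcomplete Md hMd
  have cN := hcomplete N hN
  have cM₀ := hcomplete M₀ hM₀
  choose g hg using cMd
  choose h hh using cN
  choose m hm using cM₀
  have hfin : Finite A := by
    have hsub : (Set.univ : Set A) ⊆ ⋃ e ∈ (Md : Set (Sym2 A)), {x | x ∈ e} := by
      intro a _
      exact Set.mem_biUnion (Finset.mem_coe.mpr (hg a)) (Sym2.mem_mk_left a (g a))
    have hf : (⋃ e ∈ (Md : Set (Sym2 A)), {x | x ∈ e}).Finite := by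
      refine Set.Finite.biUnion Md.finite_toSet ?_
      intro e _
      induction e using Sym2.ind with
      | _ u v =>
        have huv : {x | x ∈ s(u, v)} = {u, v} := by
          ext x; simp [Sym2.mem_iff]
        rw [huv]; exact (Set.finite_singleton v).insert u
    exact Set.finite_univ_iff.mp (Set.Finite.subset hf hsub)
  set S : A → Prop := SRReach g h (fun y => ∃ q ∈ Q, y ∈ q) with hSdef
  have hbase : ∀ a : A, (∃ q ∈ Q, a ∈ q) → rk a (g a) = rk a (h a) := by
    rintro a ⟨q, hq, haq⟩
    induction q using Sym2.ind with
    | _ u v =>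
      have hqN : s(u, v) ∈ N := hQN hq
      have hqN₀ : s(u, v) ∈ N₀ := hQN₀ hq
      rcases Sym2.mem_iff.mp haq with rfl | rfl
      · have hceq : v = h a := hN.1.2 a v (h a) hqN (hh a)
        have h1 : rk a (m a) = rk a v := hN₀eq a (m a) v (hm a) hqN₀
        have h2 : rk a (m a) = rk a (g a) := hMdeq a (m a) (g a) (hm a) (hg a)
        rw [← h2, h1, hceq]
      · have hqN' : s(a, u) ∈ N := by rwa [Sym2.eq_swap]
        have hqN₀' : s(a, u) ∈ N₀ := by rwa [Sym2.eq_swap]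
        have hceq : u = h a := hN.1.2 a u (h a) hqN' (hh a)
        have h1 : rk a (m a) = rk a u := hN₀eq a (m a) u (hm a) hqN₀'
        have h2 : rk a (m a) = rk a (g a) := hMdeq a (m a) (g a) (hm a) (hg a)
        rw [← h2, h1, hceq]
  have hindiff : ∀ a : A, S a → rk a (g a) = rk a (h a) := by
    intro a hSa
    induction hSa with
    | base hs => exact hbase _ hs
    | stepg hr ih => exact sr_indiff_step acc rk hMd hN hg hh _ ih
    | steph hr ih => exact (sr_indiff_step acc rk hN hMd hh hg _ ih.symm).symm
  set N' : Finset (Sym2 A) :=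
    N.filter (fun e => ∀ x ∈ e, S x) ∪ Md.filter (fun e => ¬ ∀ x ∈ e, S x) with hN'def
  have hmemN' : ∀ {a b : A}, s(a, b) ∈ N' → (S a ∧ s(a, b) ∈ N) ∨ (¬ S a ∧ s(a, b) ∈ Md) := by
    intro a b hab
    rcases Finset.mem_union.mp hab with hx | hx
    · obtain ⟨h1, h2⟩ := Finset.mem_filter.mp hx
      exact Or.inl ⟨h2 a (Sym2.mem_mk_left a b), h1⟩
    · obtain ⟨h1, h2⟩ := Finset.mem_filter.mp hx
      refine Or.inr ⟨?_, h1⟩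
      intro hSa
      apply h2
      intro x hx'
      rcases Sym2.mem_iff.mp hx' with rfl | rfl
      · exact hSa
      · have hbg : x = g a := hMd.1.2 a x (g a) h1 (hg a)
        rw [hbg]; exact SRReach.stepg hSa
  have hp : ∀ a : A, s(a, if S a then h a else g a) ∈ N' := by
    intro a
    by_cases hSa : S a
    · rw [if_pos hSa]
      apply Finset.mem_union_left
      refine Finset.mem_filter.mpr ⟨hh a, ?_⟩
      intro x hx'
      rcases Sym2.mem_iff.mp hx' with rfl | rfl
      · exact hSa
      · exact SRReach.steph hSa
    · rw [if_neg hSa]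
      apply Finset.mem_union_right
      refine Finset.mem_filter.mpr ⟨hg a, ?_⟩
      intro hall
      exact hSa (hall a (Sym2.mem_mk_left a (g a)))
  have hkey : ∀ {a b : A}, s(a, b) ∈ N' → rk a b = rk a (g a) := by
    intro a b hab
    rcases hmemN' hab with ⟨hSa, hmem⟩ | ⟨_, hmem⟩
    · have hb : b = h a := hN.1.2 a b (h a) hmem (hh a)
      rw [hb, ← hindiff a hSa]
    · rw [hMd.1.2 a b (g a) hmem (hg a)]
  have hmatch' : ∀ a : A, Matched N' a := fun a => ⟨_, hp a⟩
  have hSt : ∀ x y : A, StPref rk N' x y ↔ StPref rk Md x y := by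
    intro x y
    constructor
    · rintro (hnm | ⟨c, hc, hlt⟩)
      · exact absurd (hmatch' x) hnm
      · exact Or.inr ⟨g x, hg x, by rwa [← hkey hc]⟩
    · rintro (hnm | ⟨c, hc, hlt⟩)
      · exact absurd ⟨g x, hg x⟩ hnm
      · have hcg : c = g x := hMd.1.2 x c (g x) hc (hg x)
        refine Or.inr ⟨(if S x then h x else g x), hp x, ?_⟩
        rw [hkey (hp x), ← hcg]
        exact hlt
  have hWk : ∀ x y : A, WkPref rk N' x y ↔ WkPref rk Md x y := by
    intro x y
    constructor
    · rintro (hnm | ⟨c, hc, hlt⟩)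
      · exact absurd (hmatch' x) hnm
      · exact Or.inr ⟨g x, hg x, by rwa [← hkey hc]⟩
    · rintro (hnm | ⟨c, hc, hlt⟩)
      · exact absurd ⟨g x, hg x⟩ hnm
      · have hcg : c = g x := hMd.1.2 x c (g x) hc (hg x)
        refine Or.inr ⟨(if S x then h x else g x), hp x, ?_⟩
        rw [hkey (hp x), ← hcg]
        exact hlt
  have hstab' : IsStronglyStable acc rk N' := by
    constructor
    · constructor
      · intro a b hab
        rcases hmemN' hab with ⟨_, hm1⟩ | ⟨_, hm1⟩
        · exact hN.1.1 a b hm1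
        · exact hMd.1.1 a b hm1
      · intro a b c h1 h2
        rcases hmemN' h1 with ⟨hSa, hm1⟩ | ⟨hSa, hm1⟩ <;>
          rcases hmemN' h2 with ⟨hSb, hm2⟩ | ⟨hSb, hm2⟩
        · exact hN.1.2 a b c hm1 hm2
        · exact absurd hSa hSb
        · exact absurd hSb hSa
        · exact hMd.1.2 a b c hm1 hm2
    · intro a b hb
      apply hMd.2 a b
      obtain ⟨haccab, hor⟩ := hb
      refine ⟨haccab, ?_⟩
      rcases hor with ⟨h1, h2⟩ | ⟨h1, h2⟩
      · exact Or.inl ⟨(hSt a b).mp h1, (hWk b a).mp h2⟩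
      · exact Or.inr ⟨(hWk a b).mp h1, (hSt b a).mp h2⟩
  have hequiv' : REquiv rk M₀ N' := by
    intro a b c hb hc
    rw [hkey hc]
    exact hMdeq a b (g a) hb (hg a)
  have hQ' : Q ⊆ N' := by
    intro q hq
    apply Finset.mem_union_left
    refine Finset.mem_filter.mpr ⟨hQN hq, ?_⟩
    intro x hx
    exact SRReach.base ⟨q, hq, hx⟩
  obtain ⟨e, heF, heN'⟩ := hF N' hstab' hequiv' hQ'
  rcases Finset.mem_union.mp heN' with hx | hx
  · exact hcon e heF (Finset.mem_filter.mp hx).1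
  · exact hMdF e heF (Finset.mem_filter.mp hx).1
end
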